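/- Let T₀ : ℓ₁ → ({0} × c₀, ϑ) be defined by T₀(x) = (0,x), where ϑ(ξ,x) = ω(|ξ|, ‖x‖_∞) with ω the rotated γ-norm on ℝ² (0 < γ < 1). Then e_k(T₀) = 2^{1/γ−1} for all k ∈ ℕ. Moreover, for the embedding T_∞ : ℓ₁ → (ℝ × ℓ_∞, ϑ), T_∞(x) = (0,x), one has 1/2 ≤ e_k(T_∞) ≤ 1/2 + 1/2^{k−1} for all k ≥ 2. Consequently, with ι the natural metric injection ({0}×c₀, ϑ) → (ℝ×ℓ_∞, ϑ), the constant 2^{1/γ} in the inequality e_k(T) ≤ 2^{1/γ} e_k(ιT) cannot be reduced. -/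

import Mathlib

noncomputable section

/-- The rotated γ-norm `ω` on `ℝ²`. -/
def omg (γ : ℝ) : ℝ × ℝ → ℝ := fun x =>
  if |x.2| < |x.1| then |x.1|
  else (|(x.1 + x.2)/2| ^ γ + |(x.1 - x.2)/2| ^ γ) ^ (1/γ)

/-- The γ-norm `ϑ(ξ, x) = ω(|ξ|, ‖x‖_∞)` on `ℝ × ℓ_∞`. -/
def theta (γ : ℝ) : ℝ × (ℕ → ℝ) → ℝ := fun z => omg γ (|z.1|, ⨆ i, |z.2 i|)

/-- Membership in `ℓ₁`. -/
def Meml1 (x : ℕ → ℝ) : Prop := Summable fun i => |x i|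

/-- The `ℓ₁` norm. -/
def l1Norm (x : ℕ → ℝ) : ℝ := ∑' i, |x i|

/-- Membership in `c₀`. -/
def Memc0 (x : ℕ → ℝ) : Prop := Filter.Tendsto x Filter.atTop (nhds 0)

/-- Membership in `ℓ_∞`. -/
def Memlinf (x : ℕ → ℝ) : Prop := BddAbove (Set.range fun i => |x i|)

/-- The `k`-th entropy number of `T₀ : ℓ₁ → ({0} × c₀, ϑ)`, `T₀ x = (0, x)`. -/
def eT0 (γ : ℝ) (k : ℕ) : ℝ :=
  sInf {ε : ℝ | 0 < ε ∧ ∃ c : Fin (2 ^ (k - 1)) → (ℕ → ℝ), (∀ i, Memc0 (c i)) ∧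
    ∀ x : ℕ → ℝ, Meml1 x → l1Norm x ≤ 1 → ∃ i, theta γ (0, x - c i) ≤ ε}

/-- The `k`-th entropy number of `T_∞ : ℓ₁ → (ℝ × ℓ_∞, ϑ)`, `T_∞ x = (0, x)`. -/
def eTinf (γ : ℝ) (k : ℕ) : ℝ :=
  sInf {ε : ℝ | 0 < ε ∧ ∃ c : Fin (2 ^ (k - 1)) → ℝ × (ℕ → ℝ), (∀ i, Memlinf (c i).2) ∧
    ∀ x : ℕ → ℝ, Meml1 x → l1Norm x ≤ 1 → ∃ i, theta γ ((0, x) - c i) ≤ ε}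

/-!
On `{0} × ℓ_∞` the norm `ϑ` is `2^(1/γ-1)` times the sup norm, and far out the unit vector `e_n`
is at sup-distance almost `1` from any finitely many null sequences, so no cover beats the trivial
one by `0`: `e_k(T₀) = 2^(1/γ-1)`. In `ℝ × ℓ_∞` the centres may carry a first coordinate `r`
equal to the radius, and then `ϑ` only sees `r` as long as the sup-distance is at most `r`. Every
point of the unit ball of `ℓ₁` is within `1/2` of a constant sequence whose value lies in
`[-1/2, 1/2]`, and a grid of `2^(k-1)` values approximates it to within `2^(1-k)`. Conversely,
subadditivity of `t ↦ t^γ` gives `ϑ ≥ ‖·‖_∞`, and two of the unit vectors share a centre, which is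
then `ε`-close to both `0` and `1`. Letting `k → ∞` in `e_k(T₀) ≤ α e_k(ι T₀)` gives
`2^(1/γ-1) ≤ α / 2`.
-/

open Filter Set Topology

lemma iSup_abs_nonneg (x : ℕ → ℝ) : 0 ≤ ⨆ i, |x i| :=
  Real.iSup_nonneg fun _ => abs_nonneg _

section Norms

variable {γ : ℝ}

lemma omg_zero_left (hγ : 0 < γ) {s : ℝ} (hs : 0 ≤ s) :
    omg γ (0, s) = 2 ^ (1 / γ - 1) * s := by
  have hs2 : 0 ≤ s / 2 := by positivity
  rw [omg, if_neg (by simp), zero_add, zero_sub, neg_div, abs_neg, abs_of_nonneg hs2,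
    ← two_mul, Real.mul_rpow zero_le_two (Real.rpow_nonneg hs2 γ), ← Real.rpow_mul hs2,
    mul_one_div_cancel hγ.ne', Real.rpow_one, Real.rpow_sub_one two_ne_zero]
  ring

lemma omg_of_le (hγ : 0 < γ) {a s : ℝ} (hs : 0 ≤ s) (hsa : s ≤ a) : omg γ (a, s) = a := by
  have ha : 0 ≤ a := hs.trans hsa
  rcases hsa.lt_or_eq with hlt | rfl
  · rw [omg, if_pos (by rwa [abs_of_nonneg hs, abs_of_nonneg ha]), abs_of_nonneg ha]
  · rw [omg, if_neg (lt_irrefl _)]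
    dsimp only
    rw [add_self_div_two, sub_self, zero_div, abs_zero,
      Real.zero_rpow hγ.ne', add_zero, abs_of_nonneg hs, ← Real.rpow_mul hs,
      mul_one_div_cancel hγ.ne', Real.rpow_one]

lemma le_omg (hγ0 : 0 < γ) (hγ1 : γ ≤ 1) {a b : ℝ} (ha : 0 ≤ a) (hb : 0 ≤ b) :
    b ≤ omg γ (a, b) := by
  rw [omg]
  dsimp only
  rw [abs_of_nonneg ha, abs_of_nonneg hb]
  split_ifs with h
  · exact h.le
  · push Not at h
    have hu : 0 ≤ (a + b) / 2 := by positivity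
    have hv : 0 ≤ (b - a) / 2 := by linarith
    have hsub : b ^ γ ≤ ((a + b) / 2) ^ γ + ((b - a) / 2) ^ γ := by
      lift (a + b) / 2 to NNReal using hu with u hu'
      lift (b - a) / 2 to NNReal using hv with v hv'
      have hb' : b = (u + v : NNReal) := by push_cast; rw [hu', hv']; ring
      rw [hb']
      exact_mod_cast NNReal.rpow_add_le_add_rpow u v hγ0.le hγ1
    rw [abs_of_nonneg hu, abs_of_nonpos (by linarith), ← neg_div, neg_sub]
    calc b = (b ^ γ) ^ (1 / γ) := by
          rw [← Real.rpow_mul hb, mul_one_div_cancel hγ0.ne', Real.rpow_one]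
      _ ≤ _ := Real.rpow_le_rpow (Real.rpow_nonneg hb γ) hsub (by positivity)

lemma theta_zero_fst (hγ : 0 < γ) (x : ℕ → ℝ) :
    theta γ (0, x) = 2 ^ (1 / γ - 1) * ⨆ i, |x i| := by
  rw [theta, abs_zero, omg_zero_left hγ (iSup_abs_nonneg x)]

lemma theta_of_iSup_le (hγ : 0 < γ) {ξ : ℝ} {x : ℕ → ℝ} (h : ⨆ i, |x i| ≤ |ξ|) :
    theta γ (ξ, x) = |ξ| :=
  omg_of_le hγ (iSup_abs_nonneg x) h

lemma iSup_abs_le_theta (hγ0 : 0 < γ) (hγ1 : γ ≤ 1) (ξ : ℝ) (x : ℕ → ℝ) :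
    ⨆ i, |x i| ≤ theta γ (ξ, x) :=
  le_omg hγ0 hγ1 (abs_nonneg ξ) (iSup_abs_nonneg x)

end Norms

lemma Memlinf.abs_le_iSup {x : ℕ → ℝ} (hx : Memlinf x) (n : ℕ) : |x n| ≤ ⨆ i, |x i| :=
  le_ciSup hx n

lemma Memlinf.sub {x y : ℕ → ℝ} (hx : Memlinf x) (hy : Memlinf y) : Memlinf (x - y) := by
  obtain ⟨A, hA⟩ := hx
  obtain ⟨B, hB⟩ := hy
  refine ⟨A + B, forall_mem_range.2 fun i => ?_⟩
  exact (abs_sub _ _).trans (add_le_add (hA (mem_range_self i)) (hB (mem_range_self i)))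

lemma Memc0.memlinf {x : ℕ → ℝ} (hx : Memc0 x) : Memlinf x := by
  have hx' : Tendsto (fun i => |x i|) atTop (𝓝 0) := by simpa using hx.abs
  exact hx'.bddAbove_range

lemma Meml1.abs_le_l1Norm {x : ℕ → ℝ} (hx : Meml1 x) (i : ℕ) : |x i| ≤ l1Norm x :=
  hx.le_tsum i fun _ _ => abs_nonneg _

lemma Meml1.abs_add_abs_le_l1Norm {x : ℕ → ℝ} (hx : Meml1 x) {i j : ℕ} (hij : i ≠ j) :
    |x i| + |x j| ≤ l1Norm x := by
  simpa [Finset.sum_pair hij, l1Norm] using hx.sum_le_tsum {i, j} fun _ _ => abs_nonneg _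

lemma Meml1.memlinf {x : ℕ → ℝ} (hx : Meml1 x) : Memlinf x :=
  ⟨l1Norm x, forall_mem_range.2 hx.abs_le_l1Norm⟩

lemma hasSum_abs_single (n : ℕ) : HasSum (fun i => |Pi.single n (1 : ℝ) i|) 1 := by
  convert hasSum_pi_single n (1 : ℝ) using 1
  ext i
  by_cases h : i = n <;> simp [h]

lemma meml1_single (n : ℕ) : Meml1 (Pi.single n 1) :=
  (hasSum_abs_single n).summable

lemma l1Norm_single (n : ℕ) : l1Norm (Pi.single n 1) = 1 :=
  (hasSum_abs_single n).tsum_eq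

lemma exists_forall_abs_lt_of_memc0 {ι : Type*} [Finite ι] {c : ι → ℕ → ℝ}
    (hc : ∀ i, Memc0 (c i)) {δ : ℝ} (hδ : 0 < δ) : ∃ n, ∀ i, |c i n| < δ :=
  (eventually_all.2 fun i => (hc i).abs.eventually_lt_const (by rwa [abs_zero])).exists

lemma Meml1.exists_forall_abs_sub_le_half {x : ℕ → ℝ} (hx : Meml1 x) (hx1 : l1Norm x ≤ 1) :
    ∃ d, |d| ≤ 1 / 2 ∧ ∀ i, |x i - d| ≤ 1 / 2 := by
  by_cases hbig : ∃ i₀, 1 / 2 < |x i₀|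
  · obtain ⟨i₀, hi₀⟩ := hbig
    have hpos : 0 < |x i₀| := by linarith
    -- shrink `x i₀` towards `0` by exactly `1/2`
    set d := (|x i₀| - 1 / 2) / |x i₀| * x i₀
    have hd : |d| = |x i₀| - 1 / 2 := by
      rw [abs_mul, abs_div, abs_of_pos (by linarith : 0 < |x i₀| - 1 / 2), abs_abs,
        div_mul_cancel₀ _ hpos.ne']
    refine ⟨d, by linarith [hx.abs_le_l1Norm i₀], fun i => ?_⟩
    by_cases hi : i = i₀
    · subst hi
      have hxd : x i - d = 1 / 2 / |x i| * x i := by simp only [d]; field_simp; ring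
      rw [hxd, abs_mul, abs_div, abs_abs, abs_of_pos one_half_pos, div_mul_cancel₀ _ hpos.ne']
    · calc |x i - d| ≤ |x i| + |d| := abs_sub _ _
        _ ≤ 1 / 2 := by linarith [hx.abs_add_abs_le_l1Norm hi]
  · push Not at hbig
    exact ⟨0, by norm_num, fun i => by simpa using hbig i⟩

/-- The midpoints of the `N` intervals of length `2 / N` partitioning `[-1, 1]`. -/
def gridPoint (N j : ℕ) : ℝ := (2 * j + 1 - N) / N

lemma exists_abs_sub_gridPoint_le {N : ℕ} (hN : 0 < N) {d : ℝ} (hd : |d| < 1) :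
    ∃ j : Fin N, |d - gridPoint N j| ≤ 1 / N := by
  have hN' : (0 : ℝ) < N := by exact_mod_cast hN
  obtain ⟨hd1, hd2⟩ := abs_lt.1 hd
  set u := (d + 1) * N / 2
  have hu0 : 0 ≤ u := div_nonneg (mul_nonneg (by linarith) hN'.le) zero_le_two
  have huN : u < N := by simp only [u]; nlinarith
  have hfloor_le := Nat.floor_le hu0
  have hlt_floor := Nat.lt_floor_add_one u
  refine ⟨⟨⌊u⌋₊, (Nat.floor_lt hu0).2 huN⟩, ?_⟩
  have hdiff : d - gridPoint N ⌊u⌋₊ = (2 * (u - ⌊u⌋₊) - 1) / N := by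
    simp only [gridPoint, u]; field_simp; ring
  rw [hdiff, abs_div, abs_of_pos hN']
  gcongr
  rw [abs_le]; constructor <;> linarith

-- `eT0 γ k` and `eTinf γ k` are the infima of the radii satisfying these predicates.
def IsCoverRadiusT0 (γ : ℝ) (k : ℕ) (ε : ℝ) : Prop :=
  0 < ε ∧ ∃ c : Fin (2 ^ (k - 1)) → (ℕ → ℝ), (∀ i, Memc0 (c i)) ∧
    ∀ x : ℕ → ℝ, Meml1 x → l1Norm x ≤ 1 → ∃ i, theta γ (0, x - c i) ≤ ε

def IsCoverRadiusTinf (γ : ℝ) (k : ℕ) (ε : ℝ) : Prop :=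
  0 < ε ∧ ∃ c : Fin (2 ^ (k - 1)) → ℝ × (ℕ → ℝ), (∀ i, Memlinf (c i).2) ∧
    ∀ x : ℕ → ℝ, Meml1 x → l1Norm x ≤ 1 → ∃ i, theta γ ((0, x) - c i) ≤ ε

section CoverRadius

variable {γ : ℝ}

lemma isCoverRadiusT0_two_rpow (hγ : 0 < γ) (k : ℕ) :
    IsCoverRadiusT0 γ k (2 ^ (1 / γ - 1)) := by
  refine ⟨by positivity, fun _ => 0, fun _ => tendsto_const_nhds, fun x hx hx1 => ⟨0, ?_⟩⟩
  rw [sub_zero, theta_zero_fst hγ]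
  calc (2 : ℝ) ^ (1 / γ - 1) * ⨆ i, |x i| ≤ 2 ^ (1 / γ - 1) * 1 := by
        gcongr
        exact ciSup_le fun i => (hx.abs_le_l1Norm i).trans hx1
    _ = 2 ^ (1 / γ - 1) := mul_one _

lemma IsCoverRadiusT0.two_rpow_le (hγ : 0 < γ) {k : ℕ} {ε : ℝ} (h : IsCoverRadiusT0 γ k ε) :
    (2 : ℝ) ^ (1 / γ - 1) ≤ ε := by
  obtain ⟨-, c, hc, hcover⟩ := h
  set M : ℝ := 2 ^ (1 / γ - 1)
  have hM : 0 < M := by positivity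
  refine le_of_forall_pos_le_add fun η hη => ?_
  obtain ⟨n, hn⟩ := exists_forall_abs_lt_of_memc0 hc (div_pos hη hM)
  obtain ⟨i, hi⟩ := hcover _ (meml1_single n) (l1Norm_single n).le
  have hfar : 1 - η / M ≤ ⨆ j, |((Pi.single n 1 : ℕ → ℝ) - c i) j| := by
    refine le_trans ?_ (((meml1_single n).memlinf.sub (hc i).memlinf).abs_le_iSup n)
    have := abs_sub_abs_le_abs_sub (1 : ℝ) (c i n)
    simp only [Pi.sub_apply, Pi.single_eq_same, abs_one] at this ⊢
    linarith [hn i]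
  rw [theta_zero_fst hγ] at hi
  have hMη : M * (1 - η / M) = M - η := by field_simp
  linarith [mul_le_mul_of_nonneg_left hfar hM.le]

lemma eT0_eq (hγ : 0 < γ) (k : ℕ) : eT0 γ k = 2 ^ (1 / γ - 1) :=
  le_antisymm (csInf_le ⟨0, fun _ hε => hε.1.le⟩ (isCoverRadiusT0_two_rpow hγ k))
    (le_csInf ⟨_, isCoverRadiusT0_two_rpow hγ k⟩ fun _ hε => IsCoverRadiusT0.two_rpow_le hγ hε)

lemma isCoverRadiusTinf_grid (hγ : 0 < γ) (k : ℕ) :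
    IsCoverRadiusTinf γ k (1 / 2 + 1 / 2 ^ (k - 1)) := by
  set N := 2 ^ (k - 1)
  set r : ℝ := 1 / 2 + 1 / 2 ^ (k - 1)
  have hr : 0 < r := by positivity
  refine ⟨hr, fun j => (r, fun _ => gridPoint N j),
    fun j => ⟨|gridPoint N j|, forall_mem_range.2 fun _ => le_rfl⟩, fun x hx hx1 => ?_⟩
  obtain ⟨d, hd, hxd⟩ := hx.exists_forall_abs_sub_le_half hx1
  obtain ⟨j, hj⟩ := exists_abs_sub_gridPoint_le (Nat.two_pow_pos (k - 1))
    (hd.trans_lt (by norm_num))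
  have hle : ∀ i, |x i - gridPoint N j| ≤ r := fun i =>
    (abs_sub_le _ d _).trans (add_le_add (hxd i) (by simpa [N] using hj))
  refine ⟨j, ?_⟩
  have hsup : ⨆ i, |(x - fun _ : ℕ => gridPoint N j) i| ≤ |-r| := by
    rw [abs_neg, abs_of_pos hr]
    exact ciSup_le hle
  rw [Prod.mk_sub_mk, zero_sub, theta_of_iSup_le hγ hsup, abs_neg, abs_of_pos hr]

lemma eTinf_le (hγ : 0 < γ) (k : ℕ) : eTinf γ k ≤ 1 / 2 + 1 / 2 ^ (k - 1) :=
  csInf_le ⟨0, fun _ hε => hε.1.le⟩ (isCoverRadiusTinf_grid hγ k)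

lemma IsCoverRadiusTinf.one_half_le (hγ0 : 0 < γ) (hγ1 : γ ≤ 1) {k : ℕ} {ε : ℝ}
    (h : IsCoverRadiusTinf γ k ε) : 1 / 2 ≤ ε := by
  obtain ⟨-, c, hc, hcover⟩ := h
  have hclose : ∀ n, ∃ i, ∀ m, |(Pi.single n 1 : ℕ → ℝ) m - (c i).2 m| ≤ ε := by
    intro n
    obtain ⟨i, hi⟩ := hcover _ (meml1_single n) (l1Norm_single n).le
    refine ⟨i, fun m => ?_⟩
    rw [← Prod.mk.eta (p := c i), Prod.mk_sub_mk] at hi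
    calc _ ≤ ⨆ j, |((Pi.single n 1 : ℕ → ℝ) - (c i).2) j| :=
          ((meml1_single n).memlinf.sub (hc i)).abs_le_iSup m
      _ ≤ _ := iSup_abs_le_theta hγ0 hγ1 _ _
      _ ≤ ε := hi
  choose f hf using hclose
  obtain ⟨n, m, hnm, hfnm⟩ := Finite.exists_ne_map_eq_of_infinite f
  have h1 := hf n n
  have h2 := hf m n
  rw [← hfnm, Pi.single_eq_of_ne hnm] at h2
  rw [Pi.single_eq_same] at h1
  rw [abs_le] at h1 h2
  linarith

lemma one_half_le_eTinf (hγ0 : 0 < γ) (hγ1 : γ ≤ 1) (k : ℕ) : 1 / 2 ≤ eTinf γ k :=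
  le_csInf ⟨_, isCoverRadiusTinf_grid hγ0 k⟩ fun _ hε => IsCoverRadiusTinf.one_half_le hγ0 hγ1 hε

end CoverRadius

theorem metric_injection_constant_sharp (γ : ℝ) (hγ0 : 0 < γ) (hγ1 : γ < 1) :
    (∀ k : ℕ, 1 ≤ k → eT0 γ k = (2:ℝ) ^ (1/γ - 1)) ∧
    (∀ k : ℕ, 2 ≤ k → 1/2 ≤ eTinf γ k ∧ eTinf γ k ≤ 1/2 + 1 / 2 ^ (k - 1)) ∧
    (∀ α : ℝ, 0 < α → (∀ k : ℕ, 1 ≤ k → eT0 γ k ≤ α * eTinf γ k) →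
      (2:ℝ) ^ (1/γ) ≤ α) := by
  refine ⟨fun k _ => eT0_eq hγ0 k,
    fun k _ => ⟨one_half_le_eTinf hγ0 hγ1.le k, eTinf_le hγ0 k⟩, fun α hα h => ?_⟩
  have hlim : Tendsto (fun k : ℕ => α * (1 / 2 + 1 / 2 ^ (k - 1))) atTop (𝓝 (α * (1 / 2 + 0))) :=
    tendsto_const_nhds.mul (tendsto_const_nhds.add (tendsto_const_nhds.div_atTop
      ((tendsto_pow_atTop_atTop_of_one_lt one_lt_two).comp (tendsto_sub_atTop_nat 1))))
  have hle : (2 : ℝ) ^ (1 / γ - 1) ≤ α * (1 / 2 + 0) :=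
    ge_of_tendsto hlim (eventually_atTop.2 ⟨1, fun k hk =>
      eT0_eq hγ0 k ▸ (h k hk).trans (mul_le_mul_of_nonneg_left (eTinf_le hγ0 k) hα.le)⟩)
  rw [Real.rpow_sub_one two_ne_zero] at hle
  linarith
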